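/- Let f: ℝ → ℝ be differentiable and strictly increasing with |f''(z)| ≤ f'(z) for all z in a bounded interval Z. Then for all z₁, z₂ ∈ Z: f'(z₂) e^{−|z₂ − z₁|} ≤ f'(z₁) ≤ f'(z₂) e^{|z₂ − z₁|}. -/

import Mathlib

/-! If `|g'| ≤ g`, then `(g e^t)' = (g' + g) e^t ≥ 0` and `(g e^{-t})' = (g' - g) e^{-t} ≤ 0`,
so `g e^t` increases and `g e^{-t}` decreases; comparing their values at two points gives
`g x ≤ g y e^{|y - x|}`. Applied to `g = f'` this is the claim. -/

open Real Set

section ExpComparison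

variable {g : ℝ → ℝ} {D : Set ℝ}

theorem monotoneOn_mul_exp_of_neg_le_deriv (hD : Convex ℝ D) (hcont : ContinuousOn g D)
    (hdiff : DifferentiableOn ℝ g (interior D)) (hg : ∀ x ∈ interior D, -g x ≤ deriv g x) :
    MonotoneOn (fun t => g t * exp t) D := by
  refine monotoneOn_of_hasDerivWithinAt_nonneg (f' := fun t => deriv g t * exp t + g t * exp t)
    hD (hcont.mul continuous_exp.continuousOn) (fun x hx => ?_) (fun x hx => ?_)
  · have hgx := (hdiff x hx).differentiableAt (isOpen_interior.mem_nhds hx)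
    exact (hgx.hasDerivAt.mul (hasDerivAt_exp x)).hasDerivWithinAt
  · have := hg x hx
    have : 0 ≤ (deriv g x + g x) * exp x := mul_nonneg (by linarith) (exp_pos x).le
    linarith

theorem antitoneOn_mul_exp_neg_of_deriv_le (hD : Convex ℝ D) (hcont : ContinuousOn g D)
    (hdiff : DifferentiableOn ℝ g (interior D)) (hg : ∀ x ∈ interior D, deriv g x ≤ g x) :
    AntitoneOn (fun t => g t * exp (-t)) D := by
  refine antitoneOn_of_hasDerivWithinAt_nonpos
    (f' := fun t => deriv g t * exp (-t) + g t * (exp (-t) * -1)) hD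
    (hcont.mul (continuous_exp.comp continuous_neg).continuousOn) (fun x hx => ?_) (fun x hx => ?_)
  · have hgx := (hdiff x hx).differentiableAt (isOpen_interior.mem_nhds hx)
    exact (hgx.hasDerivAt.mul ((hasDerivAt_exp (-x)).comp x (hasDerivAt_neg x))).hasDerivWithinAt
  · have := hg x hx
    have : (deriv g x - g x) * exp (-x) ≤ 0 :=
      mul_nonpos_of_nonpos_of_nonneg (by linarith) (exp_pos _).le
    linarith

theorem le_mul_exp_abs_sub_of_abs_deriv_le (hD : Convex ℝ D) (hcont : ContinuousOn g D)
    (hdiff : DifferentiableOn ℝ g (interior D)) (hg : ∀ x ∈ interior D, |deriv g x| ≤ g x)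
    {x y : ℝ} (hx : x ∈ D) (hy : y ∈ D) :
    g x ≤ g y * exp |y - x| := by
  rcases le_total x y with hxy | hyx
  · have key := monotoneOn_mul_exp_of_neg_le_deriv hD hcont hdiff
      (fun z hz => (abs_le.mp (hg z hz)).1) hx hy hxy
    rw [abs_of_nonneg (sub_nonneg.mpr hxy), exp_sub, mul_div_assoc', le_div_iff₀ (exp_pos x)]
    exact key
  · have key := antitoneOn_mul_exp_neg_of_deriv_le hD hcont hdiff
      (fun z hz => (abs_le.mp (hg z hz)).2) hy hx hyx
    calc g x = g x * exp (-x) * exp x := by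
          rw [mul_assoc, ← exp_add, neg_add_cancel, exp_zero, mul_one]
      _ ≤ g y * exp (-y) * exp x := mul_le_mul_of_nonneg_right key (exp_pos x).le
      _ = g y * exp |y - x| := by
        rw [abs_of_nonpos (sub_nonpos.mpr hyx), mul_assoc, ← exp_add, neg_sub, neg_add_eq_sub]

theorem mul_exp_neg_abs_sub_le_of_abs_deriv_le (hD : Convex ℝ D) (hcont : ContinuousOn g D)
    (hdiff : DifferentiableOn ℝ g (interior D)) (hg : ∀ x ∈ interior D, |deriv g x| ≤ g x)
    {x y : ℝ} (hx : x ∈ D) (hy : y ∈ D) :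
    g y * exp (-|y - x|) ≤ g x := by
  have key := le_mul_exp_abs_sub_of_abs_deriv_le hD hcont hdiff hg hy hx
  rwa [abs_sub_comm, exp_neg, mul_inv_le_iff₀ (exp_pos _)]

end ExpComparison

theorem stmt_12_general (f : ℝ → ℝ) (A B : ℝ) (hf : ContDiff ℝ 2 f)
    (hsc : ∀ z ∈ Set.Icc A B, |deriv (deriv f) z| ≤ deriv f z)
    (z₁ z₂ : ℝ) (h₁ : z₁ ∈ Set.Icc A B) (h₂ : z₂ ∈ Set.Icc A B) :
    deriv f z₂ * Real.exp (-|z₂ - z₁|) ≤ deriv f z₁ ∧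
    deriv f z₁ ≤ deriv f z₂ * Real.exp |z₂ - z₁| := by
  have hf' : Differentiable ℝ (deriv f) :=
    (hf.iterate_deriv' 1 1).differentiable one_ne_zero
  have hsc' : ∀ z ∈ interior (Icc A B), |deriv (deriv f) z| ≤ deriv f z :=
    fun z hz => hsc z (interior_subset hz)
  exact ⟨mul_exp_neg_abs_sub_le_of_abs_deriv_le (convex_Icc A B) hf'.continuous.continuousOn
      hf'.differentiableOn hsc' h₁ h₂,
    le_mul_exp_abs_sub_of_abs_deriv_le (convex_Icc A B) hf'.continuous.continuousOn
      hf'.differentiableOn hsc' h₁ h₂⟩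

theorem stmt_12 (f : ℝ → ℝ) (A B : ℝ) (hf : ContDiff ℝ 2 f) (hmono : StrictMono f)
    (hsc : ∀ z ∈ Set.Icc A B, |deriv (deriv f) z| ≤ deriv f z)
    (z₁ z₂ : ℝ) (h₁ : z₁ ∈ Set.Icc A B) (h₂ : z₂ ∈ Set.Icc A B) :
    deriv f z₂ * Real.exp (-|z₂ - z₁|) ≤ deriv f z₁ ∧
    deriv f z₁ ≤ deriv f z₂ * Real.exp |z₂ - z₁| :=
  stmt_12_general f A B hf hsc z₁ z₂ h₁ h₂
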